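/- The TN₂-Smarandache ruled surface χ(s,v) = (T+N₂)/√2 + v N₁ of a unit-speed curve γ with Bishop curvatures k₁, k₂ has Gaussian curvature K = -(1/2)·(k₁k₂/(k₂² + v²k₁² + √2 v k₁k₂))². -/

import Mathlib

open Real RealInnerProductSpace intervalIntegral

noncomputable section

abbrev E3 : Type := EuclideanSpace ℝ (Fin 3)

/-- Cross product on `E3`. -/
def cross3 (a b : E3) : E3 :=
  WithLp.toLp 2 ![a 1 * b 2 - a 2 * b 1, a 2 * b 0 - a 0 * b 2, a 0 * b 1 - a 1 * b 0]

/-!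
Since `χ` is affine in `v`, `χ_v = N₁` and `χ_vv = 0`, so `N = 0` and `K = -M² / (EG - F²)`.
In the Bishop frame `χ_s = a T + b N₁ + c N₂` with `a = -(k₂/√2 + v k₁)`, `b = k₁/√2`,
`c = k₂/√2`, and `χ_sv = -k₁ T`. Because `T × N₁ = N₂` forces `N₂ × N₁ = -T`, we get
`χ_s × χ_v = a N₂ - c T`, hence `EG - F² = ‖χ_s × χ_v‖² = a² + c²` and `M² = k₁² c² / (a² + c²)`,
while `a² + c² = k₂² + v² k₁² + √2 v k₁ k₂`.

Where the frame is not differentiable, `deriv` returns `0`; the frame equations then force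
`k₁ k₂ = 0`, and `χ_sv = 0` as well, so both sides vanish.
-/

open Filter Topology

section RuledSurface

variable {E : Type*} [NormedAddCommGroup E] [NormedSpace ℝ E]

theorem deriv_const_add_smul (x y : E) (u : ℝ) : deriv (fun u : ℝ => x + u • y) u = y :=
  ((hasDerivAt_id u).smul_const y).const_add x |>.deriv.trans (one_smul ℝ y)

theorem deriv_add_smul {A B : ℝ → E} {s : ℝ} (hA : DifferentiableAt ℝ A s)
    (hB : DifferentiableAt ℝ B s) (u : ℝ) :
    deriv (fun t => A t + u • B t) s = deriv A s + u • deriv B s :=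
  (hA.hasDerivAt.add (hB.hasDerivAt.const_smul u)).deriv

theorem deriv_eq_zero_of_forall_ne_eq_zero {g : ℝ → E} {u₀ : ℝ} (hg : ∀ u, u ≠ u₀ → g u = 0)
    (v : ℝ) : deriv g v = 0 := by
  obtain rfl | hv := eq_or_ne v u₀
  · by_cases h₀ : g v = 0
    · have : g = 0 := funext fun u => by
        obtain rfl | hu := eq_or_ne u v
        exacts [h₀, hg u hu]
      simp [this]
    · -- `g` would be continuous at `v` yet vanish on a punctured neighbourhood
      refine deriv_zero_of_not_differentiableAt fun hd => h₀ ?_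
      refine tendsto_nhds_unique (continuousAt_iff_punctured_nhds.1 hd.continuousAt) ?_
      exact tendsto_const_nhds.congr' (eventually_nhdsWithin_of_forall fun u hu => (hg u hu).symm)
  · have : g =ᶠ[𝓝 v] fun _ => 0 := eventually_of_mem (isOpen_ne.mem_nhds hv) hg
    rw [this.deriv_eq, deriv_const]

theorem differentiableAt_of_add_smul {A B : ℝ → E} {s u₁ u₂ : ℝ} (hne : u₁ ≠ u₂)
    (h₁ : DifferentiableAt ℝ (fun t => A t + u₁ • B t) s)
    (h₂ : DifferentiableAt ℝ (fun t => A t + u₂ • B t) s) : DifferentiableAt ℝ B s := by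
  have : B = fun t => (u₁ - u₂)⁻¹ • ((A t + u₁ • B t) - (A t + u₂ • B t)) := by
    funext t
    rw [add_sub_add_left_eq_sub, ← sub_smul, inv_smul_smul₀ (sub_ne_zero.2 hne)]
  rw [this]
  exact (h₁.sub h₂).const_smul _

open Classical in
theorem deriv_deriv_add_smul (A B : ℝ → E) (s v : ℝ) :
    deriv (fun u => deriv (fun t => A t + u • B t) s) v =
      if DifferentiableAt ℝ A s then deriv B s else 0 := by
  by_cases hB : DifferentiableAt ℝ B s
  · split_ifs with hA
    · simp only [deriv_add_smul hA hB, deriv_const_add_smul]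
    · have h (u : ℝ) : ¬DifferentiableAt ℝ (fun t => A t + u • B t) s :=
        fun h => hA (((hB.const_smul u).fun_add_iff_left).1 h)
      simp only [deriv_zero_of_not_differentiableAt (h _), deriv_const]
  · rw [deriv_zero_of_not_differentiableAt hB, ite_self]
    obtain ⟨u₀, hu₀⟩ :
        ∃ u₀ : ℝ, ∀ u : ℝ, u ≠ u₀ → ¬DifferentiableAt ℝ (fun t => A t + u • B t) s := by
      by_cases hex : ∃ u₀ : ℝ, DifferentiableAt ℝ (fun t => A t + u₀ • B t) s
      · obtain ⟨u₀, h₀⟩ := hex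
        exact ⟨u₀, fun u hu h => hB (differentiableAt_of_add_smul hu h h₀)⟩
      · exact ⟨0, fun u _ => not_exists.1 hex u⟩
    exact deriv_eq_zero_of_forall_ne_eq_zero
      (fun u hu => deriv_zero_of_not_differentiableAt (hu₀ u hu)) v

end RuledSurface

section Frame

variable {F : Type*} [NormedAddCommGroup F] [InnerProductSpace ℝ F]

theorem orthonormal_vecCons_three {e₁ e₂ e₃ : F} (h₁ : ‖e₁‖ = 1) (h₂ : ‖e₂‖ = 1)
    (h₃ : ‖e₃‖ = 1) (h₁₂ : ⟪e₁, e₂⟫ = 0) (h₁₃ : ⟪e₁, e₃⟫ = 0) (h₂₃ : ⟪e₂, e₃⟫ = 0) :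
    Orthonormal ℝ ![e₁, e₂, e₃] := by
  rw [orthonormal_iff_ite]
  intro i j
  fin_cases i <;> fin_cases j <;>
    simp [real_inner_comm, h₁, h₂, h₃, h₁₂, h₁₃, h₂₃]

theorem Orthonormal.inner_three {e₁ e₂ e₃ : F} (ho : Orthonormal ℝ ![e₁, e₂, e₃])
    (x₁ x₂ x₃ y₁ y₂ y₃ : ℝ) :
    ⟪x₁ • e₁ + x₂ • e₂ + x₃ • e₃, y₁ • e₁ + y₂ • e₂ + y₃ • e₃⟫ = x₁ * y₁ + x₂ * y₂ + x₃ * y₃ := by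
  simpa [Fin.sum_univ_three, add_assoc] using ho.inner_sum ![x₁, x₂, x₃] ![y₁, y₂, y₃] Finset.univ

end Frame

theorem cross3_add_left (x y z : E3) : cross3 (x + y) z = cross3 x z + cross3 y z := by
  ext i; fin_cases i <;> simp [cross3] <;> ring

theorem cross3_smul_left (r : ℝ) (x z : E3) : cross3 (r • x) z = r • cross3 x z := by
  ext i; fin_cases i <;> simp [cross3] <;> ring

theorem cross3_self (x : E3) : cross3 x x = 0 := by
  ext i; fin_cases i <;> simp [cross3] <;> ring

theorem cross3_cross3_right (a b : E3) : cross3 (cross3 a b) b = ⟪a, b⟫ • b - ⟪b, b⟫ • a := by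
  rw [PiLp.inner_apply, PiLp.inner_apply]
  ext i; fin_cases i <;> simp [cross3, Fin.sum_univ_three] <;> ring

theorem cross3_frame {e₁ e₂ e₃ : E3} (ho : Orthonormal ℝ ![e₁, e₂, e₃]) (hc : cross3 e₁ e₂ = e₃)
    (a b c : ℝ) : cross3 (a • e₁ + b • e₂ + c • e₃) e₂ = (-c) • e₁ + a • e₃ := by
  have h₃₂ : cross3 e₃ e₂ = -e₁ := by
    have h₁₂ : ⟪e₁, e₂⟫ = 0 := ho.2 (by decide : (0 : Fin 3) ≠ 1)
    have h₂₂ : ⟪e₂, e₂⟫ = 1 := by simpa using ho.inner_three 0 1 0 0 1 0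
    rw [← hc, cross3_cross3_right, h₁₂, h₂₂, zero_smul, one_smul, zero_sub]
  simp only [cross3_add_left, cross3_smul_left, hc, cross3_self, h₃₂]
  module

def gaussCurvature (xs xv xss xsv xvv : E3) : ℝ :=
  let n := ‖cross3 xs xv‖⁻¹ • cross3 xs xv
  (⟪xss, n⟫ * ⟪xvv, n⟫ - ⟪xsv, n⟫ ^ 2) / (⟪xs, xs⟫ * ⟪xv, xv⟫ - ⟪xs, xv⟫ ^ 2)

theorem gaussCurvature_frame {e₁ e₂ e₃ : E3} (ho : Orthonormal ℝ ![e₁, e₂, e₃])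
    (hc : cross3 e₁ e₂ = e₃) (a b c μ : ℝ) (xss : E3) :
    gaussCurvature (a • e₁ + b • e₂ + c • e₃) e₂ xss (μ • e₁) 0 =
      -((μ * c) ^ 2 / (a ^ 2 + c ^ 2) ^ 2) := by
  have hE : ⟪a • e₁ + b • e₂ + c • e₃, a • e₁ + b • e₂ + c • e₃⟫ = a ^ 2 + b ^ 2 + c ^ 2 := by
    rw [ho.inner_three]; ring
  have hF : ⟪a • e₁ + b • e₂ + c • e₃, e₂⟫ = b := by simpa using ho.inner_three a b c 0 1 0
  have hG : ⟪e₂, e₂⟫ = 1 := by simpa using ho.inner_three 0 1 0 0 1 0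
  have hM : ⟪μ • e₁, (-c) • e₁ + a • e₃⟫ = -(μ * c) := by
    simpa using ho.inner_three μ 0 0 (-c) 0 a
  have hw : ‖(-c) • e₁ + a • e₃‖ ^ 2 = a ^ 2 + c ^ 2 := by
    have := ho.inner_three (-c) 0 a (-c) 0 a
    simp only [zero_smul, add_zero] at this
    rw [← real_inner_self_eq_norm_sq, this]
    ring
  dsimp only [gaussCurvature]
  rw [cross3_frame ho hc, inner_zero_left, mul_zero, real_inner_smul_right, hE, hF, hG, hM,
    mul_pow, inv_pow, hw, show (a ^ 2 + b ^ 2 + c ^ 2) * 1 - b ^ 2 = a ^ 2 + c ^ 2 by ring]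
  generalize a ^ 2 + c ^ 2 = D
  ring

section BishopFrame

variable {E : Type*} [NormedAddCommGroup E] [InnerProductSpace ℝ E] {T N₁ N₂ : ℝ → E}
  {k₁ k₂ s : ℝ}

theorem eq_zero_of_deriv_eq_smul_of_not_differentiableAt {f : ℝ → E} {c : ℝ} {x : E}
    (hf : ¬DifferentiableAt ℝ f s) (h : deriv f s = c • x) (hx : x ≠ 0) : c = 0 := by
  rw [deriv_zero_of_not_differentiableAt hf] at h
  exact (smul_eq_zero.1 h.symm).resolve_right hx

theorem eq_zero_or_of_not_differentiableAt_frame (hT : deriv T s = k₁ • N₁ s + k₂ • N₂ s)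
    (hN₁ : deriv N₁ s = -k₁ • T s) (hN₂ : deriv N₂ s = -k₂ • T s) (hTu : ‖T s‖ = 1)
    (hN₁u : ‖N₁ s‖ = 1) (hN₁N₂ : ⟪N₁ s, N₂ s⟫ = 0)
    (hd : ¬(DifferentiableAt ℝ T s ∧ DifferentiableAt ℝ N₁ s ∧ DifferentiableAt ℝ N₂ s)) :
    k₁ = 0 ∨ k₂ = 0 ∧ ¬DifferentiableAt ℝ (fun t => T t + N₂ t) s := by
  refine or_iff_not_imp_left.2 fun hk₁ => ?_
  have hT₀ : T s ≠ 0 := norm_ne_zero_iff.1 (by rw [hTu]; exact one_ne_zero)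
  have hdT : DifferentiableAt ℝ T s := by
    by_contra hdT
    rw [deriv_zero_of_not_differentiableAt hdT] at hT
    have := congrArg (⟪N₁ s, ·⟫) hT
    simp [inner_add_right, real_inner_smul_right, hN₁N₂, hN₁u] at this
    exact hk₁ this.symm
  have hdN₁ : DifferentiableAt ℝ N₁ s := by
    by_contra h
    exact hk₁ (neg_eq_zero.1 (eq_zero_of_deriv_eq_smul_of_not_differentiableAt h hN₁ hT₀))
  have hdN₂ : ¬DifferentiableAt ℝ N₂ s := fun h => hd ⟨hdT, hdN₁, h⟩
  refine ⟨neg_eq_zero.1 (eq_zero_of_deriv_eq_smul_of_not_differentiableAt hdN₂ hN₂ hT₀),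
    fun h => hdN₂ (hdT.fun_add_iff_right.1 h)⟩

end BishopFrame

theorem smarandache_curvature_formula (k₁ k₂ v : ℝ) :
    -((-k₁ * ((√2)⁻¹ * k₂)) ^ 2 / ((-((√2)⁻¹ * k₂) - v * k₁) ^ 2 + ((√2)⁻¹ * k₂) ^ 2) ^ 2) =
      -(1 / 2) * (k₁ * k₂ / (k₂ ^ 2 + v ^ 2 * k₁ ^ 2 + √2 * v * k₁ * k₂)) ^ 2 := by
  have hr : √2 ^ 2 = 2 := sq_sqrt zero_le_two
  have hD : (-((√2)⁻¹ * k₂) - v * k₁) ^ 2 + ((√2)⁻¹ * k₂) ^ 2 =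
      k₂ ^ 2 + v ^ 2 * k₁ ^ 2 + √2 * v * k₁ * k₂ := by
    rw [show (√2)⁻¹ = √2 / 2 by field_simp; exact hr.symm]
    linear_combination (k₂ ^ 2 / 2) * hr
  have hμc : (-k₁ * ((√2)⁻¹ * k₂)) ^ 2 = (k₁ * k₂) ^ 2 / 2 := by
    rw [mul_pow, mul_pow, inv_pow, hr]; ring
  rw [hD, hμc, div_pow]
  ring

/-- Gaussian curvature of the TN₂-Smarandache ruled surface. -/
theorem stmt_9
    (T N₁ N₂ : ℝ → E3) (k₁ k₂ : ℝ → ℝ)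
    (hT : ∀ s, deriv T s = k₁ s • N₁ s + k₂ s • N₂ s)
    (hN₁ : ∀ s, deriv N₁ s = -(k₁ s) • T s)
    (hN₂ : ∀ s, deriv N₂ s = -(k₂ s) • T s)
    (hTu : ∀ s, ‖T s‖ = 1) (hN₁u : ∀ s, ‖N₁ s‖ = 1) (hN₂u : ∀ s, ‖N₂ s‖ = 1)
    (hTN₁ : ∀ s, ⟪T s, N₁ s⟫ = 0) (hTN₂ : ∀ s, ⟪T s, N₂ s⟫ = 0)
    (hN₁N₂ : ∀ s, ⟪N₁ s, N₂ s⟫ = 0)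
    (horient : ∀ s, cross3 (T s) (N₁ s) = N₂ s)
    :
    ∀ s v : ℝ,
      let χ : ℝ → ℝ → E3 := fun t u => (Real.sqrt 2)⁻¹ • (T t + N₂ t) + u • N₁ t
      let χs : E3 := deriv (fun t => χ t v) s
      let χv : E3 := deriv (fun u => χ s u) v
      let χss : E3 := deriv (fun t => deriv (fun t' => χ t' v) t) s
      let χsv : E3 := deriv (fun u => deriv (fun t => χ t u) s) v
      let χvv : E3 := deriv (fun u => deriv (fun u' => χ s u') u) v
      let n : E3 := ‖cross3 χs χv‖⁻¹ • cross3 χs χv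
      let Ec : ℝ := ⟪χs, χs⟫
      let Fc : ℝ := ⟪χs, χv⟫
      let Gc : ℝ := ⟪χv, χv⟫
      let Lc : ℝ := ⟪χss, n⟫
      let Mc : ℝ := ⟪χsv, n⟫
      let Nc : ℝ := ⟪χvv, n⟫
      let Kc : ℝ := (Lc * Nc - Mc ^ 2) / (Ec * Gc - Fc ^ 2)
      let Hc : ℝ := (Ec * Nc - 2 * Mc * Fc + Lc * Gc) / (2 * (Ec * Gc - Fc ^ 2))
      Kc = -(1/2) * (k₁ s * k₂ s / (k₂ s ^ 2 + v ^ 2 * k₁ s ^ 2 + Real.sqrt 2 * v * k₁ s * k₂ s)) ^ 2 := by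
  intro s v
  change gaussCurvature _ _ _ _ _ = _
  simp only [deriv_const_add_smul, deriv_const]
  rw [deriv_deriv_add_smul (fun t => (√2)⁻¹ • (T t + N₂ t)) N₁, hN₁ s]
  by_cases hd : DifferentiableAt ℝ T s ∧ DifferentiableAt ℝ N₁ s ∧ DifferentiableAt ℝ N₂ s
  · obtain ⟨hdT, hdN₁, hdN₂⟩ := hd
    have ho : Orthonormal ℝ ![T s, N₁ s, N₂ s] :=
      orthonormal_vecCons_three (hTu s) (hN₁u s) (hN₂u s) (hTN₁ s) (hTN₂ s) (hN₁N₂ s)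
    have hχs : deriv (fun t => (√2)⁻¹ • (T t + N₂ t) + v • N₁ t) s =
        (-((√2)⁻¹ * k₂ s) - v * k₁ s) • T s + ((√2)⁻¹ * k₁ s) • N₁ s
          + ((√2)⁻¹ * k₂ s) • N₂ s := by
      rw [deriv_add_smul (by fun_prop) hdN₁,
        ((hdT.hasDerivAt.fun_add hdN₂.hasDerivAt).fun_const_smul (√2)⁻¹).deriv, hT, hN₁, hN₂]
      module
    rw [if_pos (by fun_prop), hχs, gaussCurvature_frame ho (horient s),
      smarandache_curvature_formula]
  · rcases eq_zero_or_of_not_differentiableAt_frame (hT s) (hN₁ s) (hN₂ s) (hTu s) (hN₁u s)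
      (hN₁N₂ s) hd with hk₁ | ⟨hk₂, hA⟩
    · simp [hk₁, gaussCurvature]
    · rw [if_neg fun h => hA ?_]
      · simp [hk₂, gaussCurvature]
      · simpa [smul_inv_smul₀ (show √2 ≠ 0 by positivity)] using h.fun_const_smul √2
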